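/- Let κ be a regular uncountable cardinal, T a monad on the category Type u of sets, and (A, α, β) a (P*κ, T)-tensor algebra generated by a subset X̂ ⊆ A. Define X_0 = X̂, X_{n+1} = P``(T``X_n) for n ∈ ℕ, and X_ω = ⋃_{n∈ℕ} X_n. Then P``X_ω is closed under the T-structure, i.e., T``(P``X_ω) ⊆ P``X_ω; consequently A = P``X_ω. -/

import Mathlib

open CategoryTheory

universe u

/-- Underlying object map of the non-empty `κ`-bounded powerset monad. -/
def PstarObj (κ : Cardinal.{u}) (X : Type u) : Type u :=
  {s : Set X // s.Nonempty ∧ Cardinal.mk s < κ}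

namespace PstarObj

variable {κ : Cardinal.{u}}

/-- Direct image. -/
def fmap {X Y : Type u} (f : X → Y) (s : PstarObj κ X) : PstarObj κ Y :=
  ⟨f '' s.1, s.2.1.image f, Cardinal.mk_image_le.trans_lt s.2.2⟩

@[simp] theorem fmap_coe {X Y : Type u} (f : X → Y) (s : PstarObj κ X) :
    (fmap f s).1 = f '' s.1 := rfl

/-- Unit: singletons. -/
def eta (hκ : κ.IsRegular) {X : Type u} (x : X) : PstarObj κ X :=
  ⟨{x}, Set.singleton_nonempty x, by
    rw [Cardinal.mk_singleton]
    exact lt_of_lt_of_le Cardinal.one_lt_aleph0 hκ.aleph0_le⟩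

@[simp] theorem eta_coe (hκ : κ.IsRegular) {X : Type u} (x : X) :
    (eta hκ x : PstarObj κ X).1 = {x} := rfl

/-- Multiplication: union. -/
def mu (hκ : κ.IsRegular) {X : Type u} (S : PstarObj κ (PstarObj κ X)) : PstarObj κ X :=
  ⟨⋃ t ∈ S.1, t.1,
    (S.2.1).elim fun t ht => (t.2.1).elim fun x hx => ⟨x, Set.mem_biUnion ht hx⟩,
    (Cardinal.card_biUnion_lt_iff_forall_of_isRegular hκ S.2.2).mpr fun t _ => t.2.2⟩

@[simp] theorem mu_coe (hκ : κ.IsRegular) {X : Type u} (S : PstarObj κ (PstarObj κ X)) :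
    (mu hκ S).1 = ⋃ t ∈ S.1, t.1 := rfl

end PstarObj

/-- The non-empty `κ`-bounded powerset monad `P*κ`: it sends a set `X` to the set of
non-empty subsets of `X` of cardinality `< κ`, acts by direct image, has unit
`x ↦ {x}` and multiplication given by union. -/
def Pstar (κ : Cardinal.{u}) (hκ : κ.IsRegular) : Monad (Type u) where
  obj X := PstarObj κ X
  map f := TypeCat.ofHom (PstarObj.fmap f)
  map_id X := by
    ext s
    apply Subtype.ext
    simp [PstarObj.fmap]
  map_comp {X Y Z} f g := by
    ext s
    apply Subtype.ext
    show ((f ≫ g) '' s.1 : Set Z) = g '' (f '' s.1)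
    simp [Set.image_image]
  η :=
    { app := fun X => TypeCat.ofHom fun x => PstarObj.eta hκ x
      naturality := fun X Y f => by
        ext x
        apply Subtype.ext
        show ({f x} : Set Y) = f '' {x}
        simp }
  μ :=
    { app := fun X => TypeCat.ofHom fun S => PstarObj.mu hκ S
      naturality := fun X Y f => by
        ext S
        apply Subtype.ext
        show (⋃ t ∈ (PstarObj.fmap (PstarObj.fmap f) S).1, t.1 : Set Y)
          = f '' (⋃ t ∈ S.1, t.1)
        ext y
        simp only [PstarObj.fmap_coe, Set.mem_iUnion, Set.mem_image]
        constructor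
        · rintro ⟨t, ⟨⟨u, hu, rfl⟩, hy⟩⟩
          simp only [PstarObj.fmap_coe, Set.mem_image] at hy
          obtain ⟨x, hx, rfl⟩ := hy
          exact ⟨x, ⟨u, hu, hx⟩, rfl⟩
        · rintro ⟨x, ⟨⟨u, hu, hx⟩, rfl⟩⟩
          exact ⟨PstarObj.fmap f u, ⟨⟨u, hu, rfl⟩, by
            simp only [PstarObj.fmap_coe]
            exact ⟨x, hx, rfl⟩⟩⟩ }
  left_unit X := by
    ext S
    apply Subtype.ext
    show (⋃ t ∈ (PstarObj.eta hκ S).1, t.1 : Set X) = S.1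
    simp
  right_unit X := by
    ext S
    apply Subtype.ext
    show (⋃ t ∈ (PstarObj.fmap (PstarObj.eta hκ) S).1, t.1 : Set X) = S.1
    ext y
    simp
  assoc X := by
    ext SS
    apply Subtype.ext
    show (⋃ t ∈ (PstarObj.fmap (PstarObj.mu hκ) SS).1, t.1 : Set X)
      = ⋃ t ∈ (PstarObj.mu hκ SS).1, t.1
    ext y
    simp only [PstarObj.fmap_coe, PstarObj.mu_coe, Set.mem_iUnion, Set.mem_image]
    constructor
    · rintro ⟨t, ⟨⟨U, hU, rfl⟩, hy⟩⟩
      simp only [PstarObj.mu_coe, Set.mem_iUnion] at hy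
      obtain ⟨u, hu, hy⟩ := hy
      exact ⟨u, ⟨⟨U, hU, hu⟩, hy⟩⟩
    · rintro ⟨u, ⟨⟨U, hU, hu⟩, hy⟩⟩
      exact ⟨PstarObj.mu hκ U, ⟨⟨U, hU, rfl⟩, by
        simp only [PstarObj.mu_coe, Set.mem_iUnion]
        exact ⟨u, hu, hy⟩⟩⟩

/-- A `(T,S)`-tensor algebra: a set with Eilenberg–Moore algebra structures for both
monads, satisfying the tensor law. -/
structure TensorAlg (T S : Monad (Type u)) where
  carrier : Type u
  α : T.obj carrier → carrier
  β : S.obj carrier → carrier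
  α_unit : ∀ x : carrier, α (T.η.app carrier x) = x
  α_mul : ∀ m : T.obj (T.obj carrier), α (T.μ.app carrier m) = α (T.map (TypeCat.ofHom α) m)
  β_unit : ∀ x : carrier, β (S.η.app carrier x) = x
  β_mul : ∀ m : S.obj (S.obj carrier), β (S.μ.app carrier m) = β (S.map (TypeCat.ofHom β) m)
  tensor_law : ∀ {Y Z : Type u} (p : T.obj Y) (q : S.obj Z) (f : Y × Z → carrier),
    α (T.map (TypeCat.ofHom fun y => β (S.map (TypeCat.ofHom fun z => f (y, z)) q)) p) =
      β (S.map (TypeCat.ofHom fun z => α (T.map (TypeCat.ofHom fun y => f (y, z)) p)) q)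


/-- A subset of the carrier of a tensor algebra is closed if it is closed under both
algebra structures. -/
def TensorAlg.Closed {T S : Monad (Type u)} (A : TensorAlg T S) (s : Set A.carrier) : Prop :=
  (∀ m : T.obj s, A.α (T.map (TypeCat.ofHom (Subtype.val : s → A.carrier)) m) ∈ s) ∧
    (∀ m : S.obj s, A.β (S.map (TypeCat.ofHom (Subtype.val : s → A.carrier)) m) ∈ s)

/-- A tensor algebra is generated by `X` if the only closed subset containing `X` is
the whole carrier. -/
def TensorAlg.GeneratedBy {T S : Monad (Type u)} (A : TensorAlg T S)
    (X : Set A.carrier) : Prop :=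
  ∀ s : Set A.carrier, A.Closed s → X ⊆ s → s = Set.univ

/-- `T``Y`: the least subset of the carrier containing `Y` and closed under the
`T`-algebra structure `α`. -/
def TensorAlg.TClosure {T S : Monad (Type u)} (A : TensorAlg T S)
    (Y : Set A.carrier) : Set A.carrier :=
  ⋂₀ {s : Set A.carrier |
    Y ⊆ s ∧ ∀ m : T.obj s, A.α (T.map (TypeCat.ofHom (Subtype.val : s → A.carrier)) m) ∈ s}

/-- The unordered pair `{x, y}` as an element of `P*κ`. -/
def pairEl {κ : Cardinal.{u}} (hκ : κ.IsRegular) {A : Type u} (x y : A) : PstarObj κ A :=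
  ⟨{x, y}, ⟨x, Set.mem_insert x {y}⟩, by
    have hfin : Finite (↥({x, y} : Set A)) :=
      ((Set.finite_singleton y).insert x).to_subtype
    exact lt_of_lt_of_le (Cardinal.lt_aleph0_of_finite _) hκ.aleph0_le⟩

/-- The semilattice order induced by the `P*κ`-algebra structure `β` of a
`(T, P*κ)`-tensor algebra: `x ≤ y` iff `x ∨ y = y`, where `x ∨ y = β {x, y}`. -/
def TensorAlg.le {κ : Cardinal.{u}} {hκ : κ.IsRegular} {T : Monad (Type u)}
    (A : TensorAlg T (Pstar κ hκ)) (x y : A.carrier) : Prop :=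
  A.β (pairEl hκ x y) = y

/-- `P``Y = {β s | s ⊆ Y nonempty of cardinality < κ}`. -/
def TensorAlg.PImage {κ : Cardinal.{u}} {hκ : κ.IsRegular} {T : Monad (Type u)}
    (A : TensorAlg T (Pstar κ hκ)) (Y : Set A.carrier) : Set A.carrier :=
  {a | ∃ s : PstarObj κ A.carrier, s.1 ⊆ Y ∧ A.β s = a}

/-!
Let `J` be the set of countable joins `⋁ₖ cₖ` with `cₖ ∈ T``Xₖ` (countable joins exist since `κ`
is uncountable). The tensor law lets `α` commute with such joins, and because the level of the
`k`-th term does not depend on the chain, `α` of a `T`-family of elements of `J` is again in `J`.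
A `< κ` join of elements of `J` is in `J` too: collecting the `k`-th terms of all chains into one
term of `P``(T``Xₖ) = Xₖ₊₁ ⊆ T``Xₖ₊₁`, and putting one of the original `0`-th terms in front,
gives a chain with the same join. Constant chains put `X̂` into `J`, so `J` is everything; and
`J ⊆ P``X_ω`.
-/

open Set

namespace TensorAlg

section AlphaClosure

variable {T S : Monad (Type u)}

def AlphaClosed (A : TensorAlg T S) (s : Set A.carrier) : Prop :=
  ∀ m : T.obj s, A.α (T.map (TypeCat.ofHom (Subtype.val : s → A.carrier)) m) ∈ s

variable {A : TensorAlg T S}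

theorem AlphaClosed.alpha_map_mem {s : Set A.carrier} (hs : A.AlphaClosed s) {W : Type u}
    {g : W → A.carrier} (hg : ∀ w, g w ∈ s) (m : T.obj W) :
    A.α (T.map (TypeCat.ofHom g) m) ∈ s := by
  have := hs (T.map (TypeCat.ofHom fun w => (⟨g w, hg w⟩ : s)) m)
  rwa [← Functor.map_comp_apply] at this

theorem subset_tClosure (Y : Set A.carrier) : Y ⊆ A.TClosure Y :=
  fun _ hx => mem_sInter.2 fun _ hs => hs.1 hx

theorem alphaClosed_tClosure (Y : Set A.carrier) : A.AlphaClosed (A.TClosure Y) :=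
  fun m => mem_sInter.2 fun s hs =>
    AlphaClosed.alpha_map_mem (A := A) hs.2 (fun y => mem_sInter.1 y.2 s hs) m

end AlphaClosure

end TensorAlg

namespace PstarObj

variable {κ : Cardinal.{u}}

def univNat (hunc : Cardinal.aleph0 < κ) : PstarObj κ (ULift.{u} ℕ) :=
  ⟨univ, univ_nonempty, by simpa using hunc⟩

def ofSeq (hunc : Cardinal.aleph0 < κ) {X : Type u} (c : ℕ → X) : PstarObj κ X :=
  fmap (fun n : ULift.{u} ℕ => c n.down) (univNat hunc)

@[simp] theorem ofSeq_coe (hunc : Cardinal.aleph0 < κ) {X : Type u} (c : ℕ → X) :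
    (ofSeq hunc c).1 = range c := by
  ext x
  simp only [ofSeq, fmap_coe, mem_image, mem_range]
  exact ⟨fun ⟨n, _, h⟩ => ⟨n.down, h⟩, fun ⟨n, h⟩ => ⟨⟨n⟩, trivial, h⟩⟩

def consSeq (hκ : κ.IsRegular) {X : Type u} (x : X) (t : ℕ → PstarObj κ X) :
    ℕ → PstarObj κ X
  | 0 => eta hκ x
  | k + 1 => t k

end PstarObj

namespace TensorAlg

variable {κ : Cardinal.{u}} {hκ : κ.IsRegular} {T : Monad (Type u)}
  (A : TensorAlg T (Pstar κ hκ))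

@[simp] theorem beta_eta (x : A.carrier) : A.β (PstarObj.eta hκ x) = x :=
  A.β_unit x

theorem subset_pImage (Y : Set A.carrier) : Y ⊆ A.PImage Y :=
  fun x hx => ⟨PstarObj.eta hκ x, singleton_subset_iff.2 hx, A.beta_eta x⟩

theorem beta_congr {s t : PstarObj κ A.carrier} (h : s.1 = t.1) : A.β s = A.β t :=
  congrArg A.β (Subtype.ext h)

theorem beta_fmap_beta {I : Type u} (s : PstarObj κ I) (g : I → PstarObj κ A.carrier) :
    A.β (PstarObj.fmap (fun i => A.β (g i)) s) = A.β (PstarObj.mu hκ (PstarObj.fmap g s)) := by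
  refine (A.beta_congr (t := PstarObj.fmap A.β (PstarObj.fmap g s)) ?_).trans (A.β_mul _).symm
  exact (image_image A.β g s.1).symm

theorem closed_of_pImage_subset {s : Set A.carrier} (hα : A.AlphaClosed s)
    (hβ : A.PImage s ⊆ s) : A.Closed s :=
  ⟨hα, fun _ => hβ ⟨_, image_subset_iff.2 fun x _ => x.2, rfl⟩⟩

section SeqJoins

variable (hunc : Cardinal.aleph0 < κ)

def seqJoin (c : ℕ → A.carrier) : A.carrier :=
  A.β (PstarObj.ofSeq hunc c)

def seqJoins (g : ℕ → Set A.carrier) : Set A.carrier :=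
  {x | ∃ c : ℕ → A.carrier, (∀ k, c k ∈ g k) ∧ A.seqJoin hunc c = x}

variable {A hunc}

theorem seqJoin_const (x : A.carrier) : A.seqJoin hunc (fun _ => x) = x := by
  refine (A.beta_congr ?_).trans (A.beta_eta x)
  simp

theorem seqJoins_subset_pImage {g : ℕ → Set A.carrier} {Y : Set A.carrier}
    (h : ∀ k, g k ⊆ Y) : A.seqJoins hunc g ⊆ A.PImage Y := by
  rintro _ ⟨c, hc, rfl⟩
  exact ⟨PstarObj.ofSeq hunc c, by simpa [range_subset_iff] using fun k => h k (hc k), rfl⟩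

theorem alphaClosed_seqJoins {g : ℕ → Set A.carrier} (hg : ∀ k, A.AlphaClosed (g k)) :
    A.AlphaClosed (A.seqJoins hunc g) := by
  intro m
  choose c hc hjoin using fun y : A.seqJoins hunc g => y.2
  refine ⟨fun k => A.α (T.map (TypeCat.ofHom fun y => c y k) m),
    fun k => (hg k).alpha_map_mem (fun y => hc y k) m, ?_⟩
  calc A.seqJoin hunc (fun k => A.α (T.map (TypeCat.ofHom fun y => c y k) m))
      = A.α (T.map (TypeCat.ofHom fun y => A.seqJoin hunc (c y)) m) :=
        (A.tensor_law m (PstarObj.univNat hunc) fun p => c p.1 p.2.down).symm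
    _ = A.α (T.map (TypeCat.ofHom Subtype.val) m) := by rw [funext hjoin]

theorem seqJoin_consSeq {u : PstarObj κ A.carrier} {ch : A.carrier → ℕ → A.carrier}
    (hch : ∀ v ∈ u.1, A.seqJoin hunc (ch v) = v) {v₀ : A.carrier} (hv₀ : v₀ ∈ u.1) :
    A.seqJoin hunc (fun k => A.β
      (PstarObj.consSeq hκ (ch v₀ 0) (fun k => PstarObj.fmap (ch · k) u) k)) = A.β u := by
  have hu : PstarObj.fmap (fun v => A.β (PstarObj.ofSeq hunc (ch v))) u = u :=
    Subtype.ext <| (image_congr hch).trans (image_id _)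
  calc _ = A.β (PstarObj.mu hκ (PstarObj.fmap (fun n => PstarObj.consSeq hκ (ch v₀ 0)
          (fun k => PstarObj.fmap (ch · k) u) n.down) (PstarObj.univNat hunc))) :=
        A.beta_fmap_beta _ _
    _ = A.β (PstarObj.mu hκ (PstarObj.fmap (fun v => PstarObj.ofSeq hunc (ch v)) u)) := by
        refine A.beta_congr (ext fun y => ?_)
        simp only [PstarObj.mu_coe, PstarObj.fmap_coe, biUnion_image, mem_iUnion, exists_prop,
          PstarObj.ofSeq_coe, mem_range]
        constructor
        · rintro ⟨⟨_ | k⟩, -, hy⟩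
          · exact ⟨v₀, hv₀, 0, (mem_singleton_iff.1 hy).symm⟩
          · obtain ⟨v, hv, rfl⟩ := hy
            exact ⟨v, hv, k, rfl⟩
        · rintro ⟨v, hv, k, rfl⟩
          exact ⟨⟨k + 1⟩, trivial, v, hv, rfl⟩
    _ = A.β u := by rw [← A.beta_fmap_beta, hu]

theorem pImage_seqJoins_subset {g g' : ℕ → Set A.carrier} (h0 : g 0 ⊆ g' 0)
    (hsucc : ∀ k, A.PImage (g k) ⊆ g' (k + 1)) :
    A.PImage (A.seqJoins hunc g) ⊆ A.seqJoins hunc g' := by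
  rintro _ ⟨u, hu, rfl⟩
  obtain ⟨v₀, hv₀⟩ := u.2.1
  have : Nonempty A.carrier := ⟨v₀⟩
  choose! ch hch hjoin using hu
  refine ⟨_, ?_, seqJoin_consSeq hjoin hv₀⟩
  rintro (_ | k)
  · simpa [PstarObj.consSeq] using h0 (hch hv₀ 0)
  · exact hsucc k ⟨_, image_subset_iff.2 fun _ hv => hch hv k, rfl⟩

end SeqJoins

end TensorAlg

open TensorAlg in
/-- Lemma 4.3: with `X₀ = X̂`, `X_{n+1} = P``(T``X_n)` and `X_ω = ⋃ₙ X_n`, the set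
`P``X_ω` is closed under the `T`-structure, and consequently is the whole algebra. -/
theorem PImage_closed_and_univ {κ : Cardinal.{u}} (hκ : κ.IsRegular)
    (hunc : Cardinal.aleph0 < κ) (T : Monad (Type u))
    (A : TensorAlg T (Pstar κ hκ)) (Xhat : Set A.carrier) (hgen : A.GeneratedBy Xhat)
    (Xseq : ℕ → Set A.carrier) (h0 : Xseq 0 = Xhat)
    (hsucc : ∀ n : ℕ, Xseq (n + 1) = A.PImage (A.TClosure (Xseq n))) :
    A.TClosure (A.PImage (⋃ n : ℕ, Xseq n)) ⊆ A.PImage (⋃ n : ℕ, Xseq n) ∧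
      A.PImage (⋃ n : ℕ, Xseq n) = Set.univ := by
  have hstep (n : ℕ) : A.TClosure (Xseq n) ⊆ Xseq (n + 1) :=
    hsucc n ▸ A.subset_pImage _
  have hmono : Monotone Xseq :=
    monotone_nat_of_le_succ fun n => (subset_tClosure _).trans (hstep n)
  set J := A.seqJoins hunc fun k => A.TClosure (Xseq k)
  have hJ : J = univ := by
    refine hgen J (A.closed_of_pImage_subset (alphaClosed_seqJoins fun k => alphaClosed_tClosure _)
      (pImage_seqJoins_subset subset_rfl fun k => ?_)) fun x hx => ?_
    · exact hsucc k ▸ subset_tClosure _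
    · exact ⟨fun _ => x, fun k => subset_tClosure _ (hmono (Nat.zero_le k) (h0 ▸ hx)),
        seqJoin_const x⟩
  have hD : A.PImage (⋃ n, Xseq n) = univ :=
    univ_subset_iff.1 <| hJ ▸ seqJoins_subset_pImage fun k =>
      (hstep k).trans (subset_iUnion Xseq (k + 1))
  exact ⟨hD ▸ subset_univ _, hD⟩
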